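/- Every scaled quantile-spread mixture ρ = a·Q₀ − b·Q₁ + k·(c·Q_α⁺ + (1−c)·Q_α⁻), with a, b ≥ 0, α, c ∈ [0,1], k ∈ ℝ, is quasi-convex with respect to mixtures on the set of compactly supported distributions. -/

import Mathlib

/-- A cumulative distribution function on ℝ with bounded support. -/
def IsBddCDF (F : ℝ → ℝ) : Prop :=
  Monotone F ∧ (∀ x, 0 ≤ F x ∧ F x ≤ 1) ∧
  (∀ x, ContinuousWithinAt F (Set.Ici x) x) ∧
  (∃ a b : ℝ, a < b ∧ F a = 0 ∧ F b = 1)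

/-- Essential infimum. -/
noncomputable def Q0 (F : ℝ → ℝ) : ℝ := sInf {x : ℝ | 0 < F x}

/-- Essential supremum. -/
noncomputable def Q1 (F : ℝ → ℝ) : ℝ := sInf {x : ℝ | 1 ≤ F x}

/-- Left quantile. -/
noncomputable def Qminus (α : ℝ) (F : ℝ → ℝ) : ℝ := sInf {x : ℝ | α ≤ F x}

/-- Right quantile. -/
noncomputable def Qplus (α : ℝ) (F : ℝ → ℝ) : ℝ := sInf {x : ℝ | α < F x}

/-- Mixed quantile `c·Q_α⁺ + (1−c)·Q_α⁻`, with the boundary levels `α ∈ {0,1}`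
interpreted as `Q₀` resp. `Q₁`. -/
noncomputable def Qmix (α c : ℝ) (F : ℝ → ℝ) : ℝ :=
  if α = 0 then Q0 F else if α = 1 then Q1 F
  else c * Qplus α F + (1 - c) * Qminus α F

/-!
On a strict mixture `H = λF + (1-λ)G`, `Q₀` takes the smaller and `Q₁` the larger of its values
at `F` and `G`, so `a·Q₀ - b·Q₁` at `H` is below its values at both `F` and `G`. It remains to see
that the mixed quantile at `H` lies between its values at `F` and `G`, for then `k·Qmix` at `H` is
below its value at `F` or at `G`. Each of `Q_α⁻`, `Q_α⁺` lies between its values at `F` and `G`;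
the point is that one of `F`, `G` bounds both quantiles of `H` at once: `Q_α⁻ H > Q_α⁻ G`
together with `Q_α⁺ H > Q_α⁺ F` would give points `y`, `z` with `F y < α < F z` and
`G z < α ≤ G y`, which two monotone functions cannot have.
-/

open Set

def mixture (l : ℝ) (F G : ℝ → ℝ) : ℝ → ℝ := fun x => l * F x + (1 - l) * G x

section Mixture

variable {l : ℝ} {F G : ℝ → ℝ}

lemma mixture_apply (x : ℝ) : mixture l F G x = l * F x + (1 - l) * G x := rfl

lemma mixture_one_sub : mixture (1 - l) G F = mixture l F G := by
  funext x; simp only [mixture]; ring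

lemma mixture_zero : mixture 0 F G = G := by
  funext x; simp only [mixture]; ring

lemma mixture_one : mixture 1 F G = F := by
  funext x; simp only [mixture]; ring

lemma min_le_mixture (hl : l ∈ Icc 0 1) (x : ℝ) : min (F x) (G x) ≤ mixture l F G x :=
  Convex.min_le_combo (F x) (G x) hl.1 (sub_nonneg.2 hl.2) (add_sub_cancel l 1)

lemma mixture_le_max (hl : l ∈ Icc 0 1) (x : ℝ) : mixture l F G x ≤ max (F x) (G x) :=
  Convex.combo_le_max (F x) (G x) hl.1 (sub_nonneg.2 hl.2) (add_sub_cancel l 1)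

end Mixture

lemma and_le_or_and_le_of_le_max {α : Type*} [LinearOrder α] {p p₁ p₂ q q₁ q₂ : α}
    (hp : p ≤ max p₁ p₂) (hq : q ≤ max q₁ q₂) (h₁₂ : p ≤ p₂ ∨ q ≤ q₁) (h₂₁ : p ≤ p₁ ∨ q ≤ q₂) :
    (p ≤ p₁ ∧ q ≤ q₁) ∨ (p ≤ p₂ ∧ q ≤ q₂) := by
  grind

lemma and_le_or_and_le_of_min_le {α : Type*} [LinearOrder α] {p p₁ p₂ q q₁ q₂ : α}
    (hp : min p₁ p₂ ≤ p) (hq : min q₁ q₂ ≤ q) (h₁₂ : p₂ ≤ p ∨ q₁ ≤ q) (h₂₁ : p₁ ≤ p ∨ q₂ ≤ q) :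
    (p₁ ≤ p ∧ q₁ ≤ q) ∨ (p₂ ≤ p ∧ q₂ ≤ q) :=
  and_le_or_and_le_of_le_max (α := αᵒᵈ) hp hq h₁₂ h₂₁

namespace IsBddCDF

variable {l α : ℝ} {F G : ℝ → ℝ} {S : Set ℝ}

lemma mix (hF : IsBddCDF F) (hG : IsBddCDF G) (hl : l ∈ Icc 0 1) : IsBddCDF (mixture l F G) := by
  obtain ⟨hFm, hFb, hFc, aF, bF, habF, haF, hbF⟩ := hF
  obtain ⟨hGm, hGb, hGc, aG, bG, -, haG, hbG⟩ := hG
  have hl' : 0 ≤ 1 - l := sub_nonneg.2 hl.2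
  have hFa : F (min aF aG) = 0 := le_antisymm (haF ▸ hFm (min_le_left _ _)) (hFb _).1
  have hGa : G (min aF aG) = 0 := le_antisymm (haG ▸ hGm (min_le_right _ _)) (hGb _).1
  have hFb' : F (max bF bG) = 1 := le_antisymm (hFb _).2 (hbF ▸ hFm (le_max_left _ _))
  have hGb' : G (max bF bG) = 1 := le_antisymm (hGb _).2 (hbG ▸ hGm (le_max_right _ _))
  refine ⟨(hFm.const_mul hl.1).add (hGm.const_mul hl'), fun x => ?_,
    fun x => ((hFc x).const_mul l).add ((hGc x).const_mul (1 - l)), min aF aG, max bF bG,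
    (min_le_left _ _).trans_lt (habF.trans_le (le_max_left _ _)), ?_, ?_⟩
  · obtain ⟨hF0, hF1⟩ := hFb x
    obtain ⟨hG0, hG1⟩ := hGb x
    constructor <;> simp only [mixture] <;> nlinarith [hl.1, hl']
  · simp only [mixture, hFa, hGa]; ring
  · simp only [mixture, hFb', hGb']; ring

lemma bddBelow_preimage (hF : IsBddCDF F) (hS : IsUpperSet S) (h0 : 0 ∉ S) :
    BddBelow (F ⁻¹' S) := by
  obtain ⟨a, -, -, ha, -⟩ := hF.2.2.2
  exact ⟨a, fun x hx => le_of_not_gt fun hxa => h0 (hS (ha ▸ hF.1 hxa.le) hx)⟩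

lemma preimage_nonempty (hF : IsBddCDF F) (h1 : 1 ∈ S) : (F ⁻¹' S).Nonempty := by
  obtain ⟨-, b, -, -, hb⟩ := hF.2.2.2
  exact ⟨b, show F b ∈ S from hb ▸ h1⟩

lemma apply_mem_of_sInf_preimage_lt (hF : IsBddCDF F) (hS : IsUpperSet S) (h1 : 1 ∈ S) {y : ℝ}
    (hy : sInf (F ⁻¹' S) < y) : F y ∈ S := by
  obtain ⟨x, hx, hxy⟩ := exists_lt_of_csInf_lt (hF.preimage_nonempty h1) hy
  exact hS (hF.1 hxy.le) hx

lemma apply_notMem_of_lt_sInf_preimage (hF : IsBddCDF F) (hS : IsUpperSet S) (h0 : 0 ∉ S)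
    {y : ℝ} (hy : y < sInf (F ⁻¹' S)) : F y ∉ S :=
  notMem_of_lt_csInf (s := F ⁻¹' S) hy (hF.bddBelow_preimage hS h0)

end IsBddCDF

section Quantiles

variable {l α c : ℝ} {F G : ℝ → ℝ}

lemma sInf_preimage_mixture_le_max {S : Set ℝ} (hF : IsBddCDF F) (hG : IsBddCDF G)
    (hS : IsUpperSet S) (h0 : 0 ∉ S) (h1 : 1 ∈ S) (hl : l ∈ Icc 0 1) :
    sInf (mixture l F G ⁻¹' S) ≤ max (sInf (F ⁻¹' S)) (sInf (G ⁻¹' S)) := by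
  refine le_of_forall_gt_imp_ge_of_dense fun y hy => ?_
  obtain ⟨hFy, hGy⟩ := max_lt_iff.1 hy
  have hmin : min (F y) (G y) ∈ S :=
    min_rec' (· ∈ S) (hF.apply_mem_of_sInf_preimage_lt hS h1 hFy)
      (hG.apply_mem_of_sInf_preimage_lt hS h1 hGy)
  exact csInf_le ((hF.mix hG hl).bddBelow_preimage hS h0) (hS (min_le_mixture hl y) hmin)

lemma min_le_sInf_preimage_mixture {S : Set ℝ} (hF : IsBddCDF F) (hG : IsBddCDF G)
    (hS : IsUpperSet S) (h0 : 0 ∉ S) (h1 : 1 ∈ S) (hl : l ∈ Icc 0 1) :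
    min (sInf (F ⁻¹' S)) (sInf (G ⁻¹' S)) ≤ sInf (mixture l F G ⁻¹' S) := by
  refine le_csInf ((hF.mix hG hl).preimage_nonempty h1) fun x hx => ?_
  have hmax : max (F x) (G x) ∈ S := hS (mixture_le_max hl x) hx
  rcases max_choice (F x) (G x) with h | h <;> rw [h] at hmax
  · exact (min_le_left _ _).trans (csInf_le (hF.bddBelow_preimage hS h0) hmax)
  · exact (min_le_right _ _).trans (csInf_le (hG.bddBelow_preimage hS h0) hmax)

lemma Q0_mixture_le_left (hF : IsBddCDF F) (hG : IsBddCDF G) (hl0 : 0 < l) (hl1 : l ≤ 1) :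
    Q0 (mixture l F G) ≤ Q0 F := by
  refine csInf_le_csInf ((hF.mix hG ⟨hl0.le, hl1⟩).bddBelow_preimage (isUpperSet_Ioi 0)
    (notMem_Ioi.2 le_rfl)) (hF.preimage_nonempty (mem_Ioi.2 one_pos)) fun x (hx : 0 < F x) => ?_
  have := (hG.2.1 x).1
  show 0 < l * F x + (1 - l) * G x
  nlinarith

lemma Q0_mixture_le_min (hF : IsBddCDF F) (hG : IsBddCDF G) (hl : l ∈ Ioo 0 1) :
    Q0 (mixture l F G) ≤ min (Q0 F) (Q0 G) := by
  refine le_min (Q0_mixture_le_left hF hG hl.1 hl.2.le) ?_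
  rw [← mixture_one_sub]
  exact Q0_mixture_le_left hG hF (sub_pos.2 hl.2) (sub_le_self 1 hl.1.le)

lemma Q1_le_Q1_mixture_left (hF : IsBddCDF F) (hG : IsBddCDF G) (hl0 : 0 < l) (hl1 : l ≤ 1) :
    Q1 F ≤ Q1 (mixture l F G) := by
  refine csInf_le_csInf (hF.bddBelow_preimage (isUpperSet_Ici 1) (notMem_Ici.2 one_pos))
    ((hF.mix hG ⟨hl0.le, hl1⟩).preimage_nonempty self_mem_Ici)
    fun x (hx : 1 ≤ l * F x + (1 - l) * G x) => ?_
  have := (hF.2.1 x).2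
  have := (hG.2.1 x).2
  show 1 ≤ F x
  nlinarith

lemma max_le_Q1_mixture (hF : IsBddCDF F) (hG : IsBddCDF G) (hl : l ∈ Ioo 0 1) :
    max (Q1 F) (Q1 G) ≤ Q1 (mixture l F G) := by
  refine max_le (Q1_le_Q1_mixture_left hF hG hl.1 hl.2.le) ?_
  rw [← mixture_one_sub]
  exact Q1_le_Q1_mixture_left hG hF (sub_pos.2 hl.2) (sub_le_self 1 hl.1.le)

lemma IsBddCDF.le_apply_of_Qminus_lt (hF : IsBddCDF F) (hα : α ≤ 1) {y : ℝ}
    (hy : Qminus α F < y) : α ≤ F y :=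
  hF.apply_mem_of_sInf_preimage_lt (isUpperSet_Ici α) hα hy

lemma IsBddCDF.apply_lt_of_lt_Qminus (hF : IsBddCDF F) (hα : 0 < α) {y : ℝ}
    (hy : y < Qminus α F) : F y < α :=
  not_le.1 (hF.apply_notMem_of_lt_sInf_preimage (isUpperSet_Ici α) (notMem_Ici.2 hα) hy)

lemma IsBddCDF.lt_apply_of_Qplus_lt (hF : IsBddCDF F) (hα : α < 1) {y : ℝ}
    (hy : Qplus α F < y) : α < F y :=
  hF.apply_mem_of_sInf_preimage_lt (isUpperSet_Ioi α) hα hy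

lemma IsBddCDF.apply_le_of_lt_Qplus (hF : IsBddCDF F) (hα : 0 ≤ α) {y : ℝ}
    (hy : y < Qplus α F) : F y ≤ α :=
  not_lt.1 (hF.apply_notMem_of_lt_sInf_preimage (isUpperSet_Ioi α) (notMem_Ioi.2 hα) hy)

lemma Qminus_mixture_le_or_Qplus_mixture_le (hF : IsBddCDF F) (hG : IsBddCDF G)
    (hl : l ∈ Ioo 0 1) (hα : α ∈ Ioo 0 1) :
    Qminus α (mixture l F G) ≤ Qminus α G ∨ Qplus α (mixture l F G) ≤ Qplus α F := by
  by_contra! ⟨hminus, hplus⟩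
  have hH := hF.mix hG (Ioo_subset_Icc_self hl)
  obtain ⟨y, hGy, hHy⟩ := exists_between hminus
  obtain ⟨z, hFz, hHz⟩ := exists_between hplus
  have hGy := hG.le_apply_of_Qminus_lt hα.2.le hGy
  have hHy := hH.apply_lt_of_lt_Qminus hα.1 hHy
  have hFz := hF.lt_apply_of_Qplus_lt hα.2 hFz
  have hHz := hH.apply_le_of_lt_Qplus hα.1.le hHz
  rw [mixture_apply] at hHy hHz
  have hFyz : F y < F z := by nlinarith [hl.1, hl.2]
  have hGzy : G z < G y := by nlinarith [hl.1, hl.2]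
  exact (hF.1.reflect_lt hFyz).asymm (hG.1.reflect_lt hGzy)

lemma Qminus_le_mixture_or_Qplus_le_mixture (hF : IsBddCDF F) (hG : IsBddCDF G)
    (hl : l ∈ Ioo 0 1) (hα : α ∈ Ioo 0 1) :
    Qminus α G ≤ Qminus α (mixture l F G) ∨ Qplus α F ≤ Qplus α (mixture l F G) := by
  by_contra! ⟨hminus, hplus⟩
  have hH := hF.mix hG (Ioo_subset_Icc_self hl)
  obtain ⟨y, hHy, hGy⟩ := exists_between hminus
  obtain ⟨z, hHz, hFz⟩ := exists_between hplus
  have hHy := hH.le_apply_of_Qminus_lt hα.2.le hHy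
  have hGy := hG.apply_lt_of_lt_Qminus hα.1 hGy
  have hHz := hH.lt_apply_of_Qplus_lt hα.2 hHz
  have hFz := hF.apply_le_of_lt_Qplus hα.1.le hFz
  rw [mixture_apply] at hHy hHz
  have hFzy : F z < F y := by nlinarith [hl.1, hl.2]
  have hGyz : G y < G z := by nlinarith [hl.1, hl.2]
  exact (hF.1.reflect_lt hFzy).asymm (hG.1.reflect_lt hGyz)

lemma Qminus_Qplus_mixture_le (hF : IsBddCDF F) (hG : IsBddCDF G) (hl : l ∈ Ioo 0 1)
    (hα : α ∈ Ioo 0 1) :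
    (Qminus α (mixture l F G) ≤ Qminus α F ∧ Qplus α (mixture l F G) ≤ Qplus α F) ∨
      (Qminus α (mixture l F G) ≤ Qminus α G ∧ Qplus α (mixture l F G) ≤ Qplus α G) := by
  have hl' : l ∈ Icc 0 1 := Ioo_subset_Icc_self hl
  refine and_le_or_and_le_of_le_max
    (sInf_preimage_mixture_le_max hF hG (isUpperSet_Ici α) (notMem_Ici.2 hα.1) hα.2.le hl')
    (sInf_preimage_mixture_le_max hF hG (isUpperSet_Ioi α) (notMem_Ioi.2 hα.1.le) hα.2 hl')
    (Qminus_mixture_le_or_Qplus_mixture_le hF hG hl hα) ?_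
  rw [← mixture_one_sub]
  exact Qminus_mixture_le_or_Qplus_mixture_le hG hF ⟨sub_pos.2 hl.2, sub_lt_self 1 hl.1⟩ hα

lemma Qminus_Qplus_le_mixture (hF : IsBddCDF F) (hG : IsBddCDF G) (hl : l ∈ Ioo 0 1)
    (hα : α ∈ Ioo 0 1) :
    (Qminus α F ≤ Qminus α (mixture l F G) ∧ Qplus α F ≤ Qplus α (mixture l F G)) ∨
      (Qminus α G ≤ Qminus α (mixture l F G) ∧ Qplus α G ≤ Qplus α (mixture l F G)) := by
  have hl' : l ∈ Icc 0 1 := Ioo_subset_Icc_self hl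
  refine and_le_or_and_le_of_min_le
    (min_le_sInf_preimage_mixture hF hG (isUpperSet_Ici α) (notMem_Ici.2 hα.1) hα.2.le hl')
    (min_le_sInf_preimage_mixture hF hG (isUpperSet_Ioi α) (notMem_Ioi.2 hα.1.le) hα.2 hl')
    (Qminus_le_mixture_or_Qplus_le_mixture hF hG hl hα) ?_
  rw [← mixture_one_sub]
  exact Qminus_le_mixture_or_Qplus_le_mixture hG hF ⟨sub_pos.2 hl.2, sub_lt_self 1 hl.1⟩ hα

lemma Qmix_mixture_mem_uIcc (hF : IsBddCDF F) (hG : IsBddCDF G) (hl : l ∈ Ioo 0 1)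
    (hα : α ∈ Icc 0 1) (hc : c ∈ Icc 0 1) :
    Qmix α c (mixture l F G) ∈ uIcc (Qmix α c F) (Qmix α c G) := by
  have hl' : l ∈ Icc 0 1 := Ioo_subset_Icc_self hl
  unfold Qmix
  split_ifs with h0 h1
  · exact ⟨min_le_sInf_preimage_mixture hF hG (isUpperSet_Ioi 0) (notMem_Ioi.2 le_rfl)
      (mem_Ioi.2 one_pos) hl', (Q0_mixture_le_min hF hG hl).trans min_le_max⟩
  · exact ⟨min_le_max.trans (max_le_Q1_mixture hF hG hl), sInf_preimage_mixture_le_max hF hG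
      (isUpperSet_Ici 1) (notMem_Ici.2 one_pos) self_mem_Ici hl'⟩
  have hα' : α ∈ Ioo 0 1 := ⟨hα.1.lt_of_ne' h0, hα.2.lt_of_ne h1⟩
  have combo_mono {p q p' q' : ℝ} (hp : p ≤ p') (hq : q ≤ q') :
      c * q + (1 - c) * p ≤ c * q' + (1 - c) * p' :=
    add_le_add (mul_le_mul_of_nonneg_left hq hc.1)
      (mul_le_mul_of_nonneg_left hp (sub_nonneg.2 hc.2))
  constructor
  · rcases Qminus_Qplus_le_mixture hF hG hl hα' with ⟨hm, hp⟩ | ⟨hm, hp⟩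
    exacts [min_le_of_left_le (combo_mono hm hp), min_le_of_right_le (combo_mono hm hp)]
  · rcases Qminus_Qplus_mixture_le hF hG hl hα' with ⟨hm, hp⟩ | ⟨hm, hp⟩
    exacts [le_max_of_le_left (combo_mono hm hp), le_max_of_le_right (combo_mono hm hp)]

end Quantiles

/-- Every scaled quantile-spread mixture is m-quasi-convex. -/
theorem scaled_quantile_spread_mixture_mqc (a b α c k : ℝ)
    (ha : 0 ≤ a) (hb : 0 ≤ b) (hα : α ∈ Set.Icc (0 : ℝ) 1) (hc : c ∈ Set.Icc (0 : ℝ) 1)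
    (ρ : (ℝ → ℝ) → ℝ)
    (hρ : ∀ F : ℝ → ℝ, IsBddCDF F → ρ F = a * Q0 F - b * Q1 F + k * Qmix α c F) :
    ∀ F G : ℝ → ℝ, IsBddCDF F → IsBddCDF G → ∀ l ∈ Set.Icc (0 : ℝ) 1,
      ρ (fun x => l * F x + (1 - l) * G x) ≤ max (ρ F) (ρ G) := by
  intro F G hF hG l hl
  change ρ (mixture l F G) ≤ max (ρ F) (ρ G)
  rcases hl.1.eq_or_lt with rfl | hl0
  · rw [mixture_zero]; exact le_max_right _ _
  rcases hl.2.eq_or_lt with rfl | hl1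
  · rw [mixture_one]; exact le_max_left _ _
  have hl' : l ∈ Ioo 0 1 := ⟨hl0, hl1⟩
  obtain ⟨hQ0F, hQ0G⟩ := le_min_iff.1 (Q0_mixture_le_min hF hG hl')
  obtain ⟨hQ1F, hQ1G⟩ := max_le_iff.1 (max_le_Q1_mixture hF hG hl')
  have hkQmix := image_const_mul_uIcc k _ _ ▸
    mem_image_of_mem (k * ·) (Qmix_mixture_mem_uIcc hF hG hl' hα hc)
  rw [hρ F hF, hρ G hG, hρ _ (hF.mix hG hl)]
  rcases le_max_iff.1 hkQmix.2 with hk | hk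
  · refine le_max_of_le_left ?_
    linarith [mul_le_mul_of_nonneg_left hQ0F ha, mul_le_mul_of_nonneg_left hQ1F hb]
  · refine le_max_of_le_right ?_
    linarith [mul_le_mul_of_nonneg_left hQ0G ha, mul_le_mul_of_nonneg_left hQ1G hb]
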